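/- arXiv:0709.0672 — 2 statements merged into one kernel-verified Lean document; each statement's English description precedes it below -/
import Mathlib

section
/- Let φ : ℝᵐ → ℝⁿ be a C² map and λ : ℝᵐ → ℝ a function such that each component φᵢ is harmonic (Δφᵢ = 0) and ⟨∇φᵢ(x), ∇φⱼ(x)⟩ = λ(x)²·δᵢⱼ for all i, j and x. Then for every C² function f : ℝⁿ → ℝ, Δ(f∘φ)(x) = λ(x)²·(Δf)(φ(x)). In particular, if f is harmonic then f∘φ is harmonic, so φ is a harmonic morphism. -/
variable {E : Type*} [NormedAddCommGroup E] [NormedSpace ℝ E]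

lemma aux_second {F : Type*} [NormedAddCommGroup F] [NormedSpace ℝ F]
    (g : E → F) {x : E} (hg : DifferentiableAt ℝ (fderiv ℝ g) x) (v w : E) :
    fderiv ℝ (fun y => fderiv ℝ g y v) x w = (fderiv ℝ (fderiv ℝ g) x w) v := by
  rw [fderiv_clm_apply hg (differentiableAt_const v)]
  simp

lemma aux_proj {n : ℕ} (g : E → (Fin n → ℝ)) {x : E} (hg : DifferentiableAt ℝ g x)
    (i : Fin n) (w : E) :
    fderiv ℝ (fun y => g y i) x w = (fderiv ℝ g x w) i := by
  have h := ((ContinuousLinearMap.proj (R := ℝ) (φ := fun _ : Fin n => ℝ) i).hasFDerivAt.comp x hg.hasFDerivAt).fderiv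
  have h2 : (fun y => g y i) = (ContinuousLinearMap.proj (R := ℝ) (φ := fun _ : Fin n => ℝ) i) ∘ g := rfl
  rw [h2, h]; rfl

lemma aux_expand {n : ℕ} (u : Fin n → ℝ) :
    u = ∑ i, u i • (Pi.single i (1:ℝ) : Fin n → ℝ) := by
  funext j
  simp [Finset.sum_apply, Pi.single_apply, mul_ite]

lemma aux_bilin {n : ℕ} (B : (Fin n → ℝ) →L[ℝ] (Fin n → ℝ) →L[ℝ] ℝ) (u v : Fin n → ℝ) :
    B u v = ∑ i, ∑ j, u i * v j *
      B (Pi.single i (1:ℝ)) (Pi.single j (1:ℝ)) := by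
  conv_lhs => rw [aux_expand u, aux_expand v]
  simp only [map_sum, ContinuousLinearMap.sum_apply, map_smul, ContinuousLinearMap.smul_apply,
    smul_eq_mul]
  rw [Finset.sum_comm]
  refine Finset.sum_congr rfl fun i _ => ?_
  rw [Finset.mul_sum]
  exact Finset.sum_congr rfl fun j _ => by ring




/-- The Euclidean Laplacian of `g : ℝᵐ → ℝ`, as the sum of second directional
derivatives along the standard basis vectors. -/
noncomputable def lap {m : ℕ} (g : (Fin m → ℝ) → ℝ) (x : Fin m → ℝ) : ℝ :=
  ∑ i, fderiv ℝ (fun y => fderiv ℝ g y (Pi.single i 1)) x (Pi.single i 1)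

/-- If `φ : ℝᵐ → ℝⁿ` is `C²` with harmonic components and
`⟨∇φᵢ, ∇φⱼ⟩ = λ²·δᵢⱼ` pointwise, then `Δ(f∘φ) = λ²·(Δf)∘φ` for every `C²`
function `f`; in particular `φ` pulls back harmonic functions to harmonic
functions, i.e. `φ` is a harmonic morphism. -/
theorem stmt_10 {m n : ℕ} (φ : (Fin m → ℝ) → (Fin n → ℝ)) (lam : (Fin m → ℝ) → ℝ)
    (hφ : ContDiff ℝ 2 φ)
    (hharm : ∀ (i : Fin n) (x : Fin m → ℝ), lap (fun y => φ y i) x = 0)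
    (hconf : ∀ (i j : Fin n) (x : Fin m → ℝ),
      ∑ k, fderiv ℝ (fun y => φ y i) x (Pi.single k 1) *
          fderiv ℝ (fun y => φ y j) x (Pi.single k 1) =
        (lam x) ^ 2 * (if i = j then 1 else 0))
    (f : (Fin n → ℝ) → ℝ) (hf : ContDiff ℝ 2 f) :
    (∀ x, lap (f ∘ φ) x = (lam x) ^ 2 * lap f (φ x)) ∧
    ((∀ y, lap f y = 0) → ∀ x, lap (f ∘ φ) x = 0) := by
  have hφd : Differentiable ℝ φ := hφ.differentiable two_ne_zero
  have hfd : Differentiable ℝ f := hf.differentiable two_ne_zero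
  have hφ2 : Differentiable ℝ (fderiv ℝ φ) :=
    (hφ.fderiv_right (m := 1) (by norm_num)).differentiable one_ne_zero
  have hf2 : Differentiable ℝ (fderiv ℝ f) :=
    (hf.fderiv_right (m := 1) (by norm_num)).differentiable one_ne_zero
  have key : ∀ x, lap (f ∘ φ) x = (lam x) ^ 2 * lap f (φ x) := by
    intro x
    set e : Fin m → (Fin m → ℝ) := fun k => Pi.single k 1 with he
    set ε : Fin n → (Fin n → ℝ) := fun i => Pi.single i 1 with hε
    set B : (Fin n → ℝ) →L[ℝ] (Fin n → ℝ) →L[ℝ] ℝ := fderiv ℝ (fderiv ℝ f) (φ x) with hB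
    set u : Fin m → (Fin n → ℝ) := fun k => fderiv ℝ φ x (e k) with hu
    set S : Fin m → (Fin n → ℝ) := fun k => fderiv ℝ (fun y => fderiv ℝ φ y (e k)) x (e k) with hS
    -- derivative of components of φ
    have hcomp : ∀ (i : Fin n) (y : Fin m → ℝ) (w : Fin m → ℝ),
        fderiv ℝ (fun z => φ z i) y w = (fderiv ℝ φ y w) i :=
      fun i y w => aux_proj φ (hφd y) i w
    -- step 1 : compute each Laplacian term of f ∘ φ
    have hterm : ∀ k, fderiv ℝ (fun y => fderiv ℝ (f ∘ φ) y (e k)) x (e k)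
        = fderiv ℝ f (φ x) (S k) + B (u k) (u k) := by
      intro k
      have h1 : (fun y => fderiv ℝ (f ∘ φ) y (e k))
          = fun y => (fderiv ℝ f (φ y)) (fderiv ℝ φ y (e k)) := by
        funext y
        rw [fderiv_comp y (hfd (φ y)) (hφd y)]
        rfl
      have hc : DifferentiableAt ℝ (fun y => fderiv ℝ f (φ y)) x :=
        DifferentiableAt.comp x (hf2 (φ x)) (hφd x)
      have hud : DifferentiableAt ℝ (fun y => fderiv ℝ φ y (e k)) x :=
        (hφ2 x).clm_apply (differentiableAt_const _)
      have h3 : fderiv ℝ (fun y => fderiv ℝ f (φ y)) x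
          = (fderiv ℝ (fderiv ℝ f) (φ x)).comp (fderiv ℝ φ x) :=
        fderiv_comp x (hf2 (φ x)) (hφd x)
      rw [h1, fderiv_clm_apply hc hud]
      simp [h3]; rfl
  -- step 2 : the sum of S k vanishes by harmonicity
    have hSsum : ∑ k, S k = 0 := by
      funext i
      rw [Finset.sum_apply]
      have : ∀ k, S k i = fderiv ℝ (fun y => fderiv ℝ (fun z => φ z i) y (e k)) x (e k) := by
        intro k
        have hud : DifferentiableAt ℝ (fun y => fderiv ℝ φ y (e k)) x :=
          (hφ2 x).clm_apply (differentiableAt_const _)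
        rw [hS]
        rw [show (fun y => fderiv ℝ (fun z => φ z i) y (e k))
            = fun y => (fderiv ℝ φ y (e k)) i from funext fun y => hcomp i y (e k)]
        exact (aux_proj (fun y => fderiv ℝ φ y (e k)) hud i (e k)).symm
      simp only [this]
      exact hharm i x
    -- step 3 : conformality sum
    have hconf' : ∀ i j, ∑ k, u k i * u k j = (lam x) ^ 2 * (if i = j then 1 else 0) := by
      intro i j
      rw [← hconf i j x]
      exact Finset.sum_congr rfl fun k _ => by rw [hu]; simp [hcomp]; rfl
    -- step 4 : sum of bilinear terms
    have hBsum : ∑ k, B (u k) (u k) = (lam x) ^ 2 * ∑ i, B (ε i) (ε i) := by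
      have : ∀ k, B (u k) (u k) = ∑ i, ∑ j, u k i * u k j * B (ε i) (ε j) :=
        fun k => aux_bilin B (u k) (u k)
      simp only [this]
      rw [Finset.sum_comm]
      have swap : ∀ i, ∑ k, ∑ j, u k i * u k j * B (ε i) (ε j)
          = ∑ j, (∑ k, u k i * u k j) * B (ε i) (ε j) := by
        intro i
        rw [Finset.sum_comm]
        exact Finset.sum_congr rfl fun j _ => by rw [Finset.sum_mul]
      simp only [swap, hconf']
      rw [Finset.mul_sum]
      refine Finset.sum_congr rfl fun i _ => ?_
      rw [Finset.sum_eq_single i]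
      · simp
      · intro j _ hji
        simp [Ne.symm hji]
      · simp
    -- put it together
    unfold lap
    show ∑ k, fderiv ℝ (fun y => fderiv ℝ (f ∘ φ) y (e k)) x (e k) = _
    simp only [hterm]
    rw [Finset.sum_add_distrib, ← map_sum, hSsum, hBsum]
    rw [map_zero, zero_add]
    congr 1
    exact (Finset.sum_congr rfl fun i _ =>
      (aux_second f (hf2.differentiableAt) (ε i) (ε i))).symm
  exact ⟨key, fun hh x => by rw [key x, hh (φ x), mul_zero]⟩
end

section
/- Let φ : ℝᵐ → ℂ be a C² map, identified with (u,v) = (Re φ, Im φ), such that Δu = Δv = 0, ⟨∇u, ∇v⟩ = 0, and |∇u| = |∇v| pointwise. If f : ℂ → ℂ is holomorphic, then the composition f∘φ again satisfies all three conditions: both components are harmonic, their gradients are pointwise orthogonal, and of equal length. -/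
/-- Partial derivative of `g` at `x` in the `k`-th coordinate direction. -/
noncomputable def pd {m : ℕ} (g : (Fin m → ℝ) → ℝ) (x : Fin m → ℝ) (k : Fin m) : ℝ :=
  fderiv ℝ g x (Pi.single k 1)

/-- If `φ = u + iv : ℝᵐ → ℂ` is `C²` with `u`, `v` harmonic, `⟨∇u,∇v⟩ = 0` and
`|∇u| = |∇v|` pointwise, and `f : ℂ → ℂ` is holomorphic, then `f ∘ φ` again
satisfies all three conditions. -/
theorem stmt_13 {m : ℕ} (φ : (Fin m → ℝ) → ℂ) (hφ : ContDiff ℝ 2 φ)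
    (hu : ∀ x, lap (fun y => (φ y).re) x = 0)
    (hv : ∀ x, lap (fun y => (φ y).im) x = 0)
    (horth : ∀ x, ∑ k, pd (fun y => (φ y).re) x k * pd (fun y => (φ y).im) x k = 0)
    (heq : ∀ x, ∑ k, (pd (fun y => (φ y).re) x k) ^ 2 =
      ∑ k, (pd (fun y => (φ y).im) x k) ^ 2)
    (f : ℂ → ℂ) (hf : Differentiable ℂ f) :
    (∀ x, lap (fun y => (f (φ y)).re) x = 0) ∧
    (∀ x, lap (fun y => (f (φ y)).im) x = 0) ∧
    (∀ x, ∑ k, pd (fun y => (f (φ y)).re) x k * pd (fun y => (f (φ y)).im) x k = 0) ∧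
    (∀ x, ∑ k, (pd (fun y => (f (φ y)).re) x k) ^ 2 =
      ∑ k, (pd (fun y => (f (φ y)).im) x k) ^ 2) := by
  classical
  have hφd : Differentiable ℝ φ := hφ.differentiable two_ne_zero
  have hf2 : ContDiff ℂ ((1 : WithTop ℕ∞) + 1) f := hf.contDiff
  have hf' : Differentiable ℂ (deriv f) := by
    have := (contDiff_succ_iff_deriv.mp hf2).2.2
    exact this.differentiable one_ne_zero
  have hre : ∀ (F : (Fin m → ℝ) → ℂ) (x : Fin m → ℝ), DifferentiableAt ℝ F x →
      ∀ v, fderiv ℝ (fun y => (F y).re) x v = (fderiv ℝ F x v).re := by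
    intro F x hF v
    have h : fderiv ℝ (fun y => (F y).re) x = (Complex.reCLM).comp (fderiv ℝ F x) :=
      (Complex.reCLM.hasFDerivAt.comp x hF.hasFDerivAt).fderiv
    rw [h]; rfl
  have him : ∀ (F : (Fin m → ℝ) → ℂ) (x : Fin m → ℝ), DifferentiableAt ℝ F x →
      ∀ v, fderiv ℝ (fun y => (F y).im) x v = (fderiv ℝ F x v).im := by
    intro F x hF v
    have h : fderiv ℝ (fun y => (F y).im) x = (Complex.imCLM).comp (fderiv ℝ F x) :=
      (Complex.imCLM.hasFDerivAt.comp x hF.hasFDerivAt).fderiv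
    rw [h]; rfl
  have hcd : ∀ (g : ℂ → ℂ), Differentiable ℂ g → Differentiable ℝ (fun z => g (φ z)) :=
    fun g hg => (hg.restrictScalars ℝ).comp hφd
  have hchain : ∀ (g : ℂ → ℂ), Differentiable ℂ g → ∀ y v,
      fderiv ℝ (fun z => g (φ z)) y v = deriv g (φ y) * fderiv ℝ φ y v := by
    intro g hg y v
    have h1 : HasFDerivAt g ((fderiv ℂ g (φ y)).restrictScalars ℝ) (φ y) :=
      ((hg (φ y)).hasFDerivAt).restrictScalars ℝ
    have h2 : HasFDerivAt (fun z => g (φ z))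
        (((fderiv ℂ g (φ y)).restrictScalars ℝ).comp (fderiv ℝ φ y)) y :=
      h1.comp y (hφd y).hasFDerivAt
    rw [h2.fderiv]
    have h3 : fderiv ℂ g (φ y) (fderiv ℝ φ y v) = deriv g (φ y) * fderiv ℝ φ y v :=
      calc fderiv ℂ g (φ y) (fderiv ℝ φ y v)
          = fderiv ℂ g (φ y) (((fderiv ℝ φ y v : ℂ)) • (1 : ℂ)) := by norm_num
        _ = (fderiv ℝ φ y v : ℂ) • fderiv ℂ g (φ y) 1 := map_smul _ _ _
        _ = deriv g (φ y) * fderiv ℝ φ y v := by rw [fderiv_apply_one_eq_deriv, smul_eq_mul, mul_comm]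
    simpa using h3
  -- differentiability of directional derivatives of φ
  have hDk : ∀ k : Fin m, Differentiable ℝ (fun y => fderiv ℝ φ y (Pi.single k 1)) := by
    intro k
    have h1 : ContDiff ℝ 1 (fderiv ℝ φ) := hφ.fderiv_right (by norm_num)
    exact (h1.differentiable one_ne_zero).clm_apply (differentiable_const _)
  -- the sum of squares of directional derivatives vanishes
  have hQ : ∀ x, (∑ k, (fderiv ℝ φ x (Pi.single k 1))^2) = 0 := by
    intro x
    apply Complex.ext <;>
      simp only [Complex.re_sum, Complex.im_sum, Complex.zero_re, Complex.zero_im, sq,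
        Complex.mul_re, Complex.mul_im]
    · have h := heq x
      simp only [pd] at h
      have ha : ∀ k : Fin m, (fderiv ℝ φ x (Pi.single k 1)).re
          = fderiv ℝ (fun y => (φ y).re) x (Pi.single k 1) :=
        fun k => (hre φ x (hφd x) _).symm
      have hb : ∀ k : Fin m, (fderiv ℝ φ x (Pi.single k 1)).im
          = fderiv ℝ (fun y => (φ y).im) x (Pi.single k 1) :=
        fun k => (him φ x (hφd x) _).symm
      simp only [ha, hb]
      rw [Finset.sum_sub_distrib]
      simp only [← sq]
      rw [h]; ring
    · have h := horth x
      simp only [pd] at h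
      have ha : ∀ k : Fin m, (fderiv ℝ φ x (Pi.single k 1)).re
          = fderiv ℝ (fun y => (φ y).re) x (Pi.single k 1) :=
        fun k => (hre φ x (hφd x) _).symm
      have hb : ∀ k : Fin m, (fderiv ℝ φ x (Pi.single k 1)).im
          = fderiv ℝ (fun y => (φ y).im) x (Pi.single k 1) :=
        fun k => (him φ x (hφd x) _).symm
      simp only [ha, hb]
      have : ∀ k : Fin m, fderiv ℝ (fun y => (φ y).re) x (Pi.single k 1) *
          fderiv ℝ (fun y => (φ y).im) x (Pi.single k 1) +
          fderiv ℝ (fun y => (φ y).im) x (Pi.single k 1) *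
          fderiv ℝ (fun y => (φ y).re) x (Pi.single k 1)
          = 2 * (fderiv ℝ (fun y => (φ y).re) x (Pi.single k 1) *
          fderiv ℝ (fun y => (φ y).im) x (Pi.single k 1)) := fun k => by ring
      rw [Finset.sum_congr rfl fun k _ => this k, ← Finset.mul_sum, h, mul_zero]
  -- the "complex Laplacian" of φ vanishes
  have hS : ∀ x, (∑ k, fderiv ℝ (fun y => fderiv ℝ φ y (Pi.single k 1)) x (Pi.single k 1)) = 0 := by
    intro x
    apply Complex.ext <;>
      simp only [Complex.re_sum, Complex.im_sum, Complex.zero_re, Complex.zero_im]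
    · have h := hu x
      simp only [lap] at h
      rw [← h]
      refine Finset.sum_congr rfl fun k _ => ?_
      rw [← hre _ x (hDk k x) (Pi.single k 1)]
      congr 1
      apply Filter.EventuallyEq.fderiv_eq
      filter_upwards with y
      exact (hre φ y (hφd y) _).symm
    · have h := hv x
      simp only [lap] at h
      rw [← h]
      refine Finset.sum_congr rfl fun k _ => ?_
      rw [← him _ x (hDk k x) (Pi.single k 1)]
      congr 1
      apply Filter.EventuallyEq.fderiv_eq
      filter_upwards with y
      exact (him φ y (hφd y) _).symm
  -- product rule for the first derivative of the composition
  have hprod : ∀ (k : Fin m) (x : Fin m → ℝ),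
      HasFDerivAt (fun y => deriv f (φ y) * fderiv ℝ φ y (Pi.single k 1))
        (deriv f (φ x) • fderiv ℝ (fun y => fderiv ℝ φ y (Pi.single k 1)) x
          + fderiv ℝ φ x (Pi.single k 1) • fderiv ℝ (fun y => deriv f (φ y)) x) x :=
    fun k x => ((hcd (deriv f) hf' x).hasFDerivAt).mul ((hDk k x).hasFDerivAt)
  have hsecond : ∀ (x : Fin m → ℝ) (k : Fin m),
      fderiv ℝ (fun y => fderiv ℝ (fun z => f (φ z)) y (Pi.single k 1)) x (Pi.single k 1)
        = deriv f (φ x) * (fderiv ℝ (fun y => fderiv ℝ φ y (Pi.single k 1)) x (Pi.single k 1))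
          + deriv (deriv f) (φ x) *
            (fderiv ℝ φ x (Pi.single k 1) * fderiv ℝ φ x (Pi.single k 1)) := by
    intro x k
    have hfun : (fun y => fderiv ℝ (fun z => f (φ z)) y (Pi.single k 1))
        = fun y => deriv f (φ y) * fderiv ℝ φ y (Pi.single k 1) :=
      funext fun y => hchain f hf y _
    rw [hfun, (hprod k x).fderiv]
    simp only [ContinuousLinearMap.add_apply, ContinuousLinearMap.smul_apply, smul_eq_mul]
    rw [hchain (deriv f) hf' x]
    ring
  have hdiffk : ∀ (k : Fin m) (x : Fin m → ℝ),
      DifferentiableAt ℝ (fun y => fderiv ℝ (fun z => f (φ z)) y (Pi.single k 1)) x := by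
    intro k x
    have hfun2 : (fun y => fderiv ℝ (fun z => f (φ z)) y (Pi.single k 1))
        = fun y => deriv f (φ y) * fderiv ℝ φ y (Pi.single k 1) :=
      funext fun y => hchain f hf y _
    rw [hfun2]; exact (hprod k x).differentiableAt
  -- the complex second-derivative sum vanishes
  have hcsum : ∀ x : Fin m → ℝ,
      (∑ k, fderiv ℝ (fun y => fderiv ℝ (fun z => f (φ z)) y (Pi.single k 1)) x
        (Pi.single k 1)) = 0 := by
    intro x
    rw [Finset.sum_congr rfl (fun k _ => hsecond x k), Finset.sum_add_distrib,
      ← Finset.mul_sum, ← Finset.mul_sum, hS x]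
    have h := hQ x
    simp only [sq] at h
    rw [h]; ring
  -- the sum of squares of first derivatives vanishes
  have hsq : ∀ x : Fin m → ℝ,
      (∑ k, (deriv f (φ x) * fderiv ℝ φ x (Pi.single k 1)) ^ 2) = 0 := by
    intro x
    simp only [mul_pow, ← Finset.mul_sum, hQ x, mul_zero]
  have hpdre : ∀ (x : Fin m → ℝ) (k : Fin m), pd (fun y => (f (φ y)).re) x k
      = (deriv f (φ x) * fderiv ℝ φ x (Pi.single k 1)).re := by
    intro x k
    rw [pd, hre _ x (hcd f hf x), hchain f hf]
  have hpdim : ∀ (x : Fin m → ℝ) (k : Fin m), pd (fun y => (f (φ y)).im) x k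
      = (deriv f (φ x) * fderiv ℝ φ x (Pi.single k 1)).im := by
    intro x k
    rw [pd, him _ x (hcd f hf x), hchain f hf]
  refine ⟨?_, ?_, ?_, ?_⟩
  · intro x
    rw [lap]
    have hterm : ∀ k : Fin m,
        fderiv ℝ (fun y => fderiv ℝ (fun z => (f (φ z)).re) y (Pi.single k 1)) x (Pi.single k 1)
          = (fderiv ℝ (fun y => fderiv ℝ (fun z => f (φ z)) y (Pi.single k 1)) x
              (Pi.single k 1)).re := by
      intro k
      have hfun : (fun y => fderiv ℝ (fun z => (f (φ z)).re) y (Pi.single k 1))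
          = fun y => (fderiv ℝ (fun z => f (φ z)) y (Pi.single k 1)).re :=
        funext fun y => hre _ y (hcd f hf y) _
      rw [hfun]
      exact hre _ x (hdiffk k x) _
    rw [Finset.sum_congr rfl (fun k _ => hterm k), ← Complex.re_sum, hcsum x, Complex.zero_re]
  · intro x
    rw [lap]
    have hterm : ∀ k : Fin m,
        fderiv ℝ (fun y => fderiv ℝ (fun z => (f (φ z)).im) y (Pi.single k 1)) x (Pi.single k 1)
          = (fderiv ℝ (fun y => fderiv ℝ (fun z => f (φ z)) y (Pi.single k 1)) x
              (Pi.single k 1)).im := by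
      intro k
      have hfun : (fun y => fderiv ℝ (fun z => (f (φ z)).im) y (Pi.single k 1))
          = fun y => (fderiv ℝ (fun z => f (φ z)) y (Pi.single k 1)).im :=
        funext fun y => him _ y (hcd f hf y) _
      rw [hfun]
      exact him _ x (hdiffk k x) _
    rw [Finset.sum_congr rfl (fun k _ => hterm k), ← Complex.im_sum, hcsum x, Complex.zero_im]
  · intro x
    have h := congrArg Complex.im (hsq x)
    rw [Complex.im_sum] at h
    simp only [Complex.zero_im] at h
    have hh : ∀ z : ℂ, (z ^ 2).im = 2 * (z.re * z.im) := fun z => by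
      rw [sq, Complex.mul_im]; ring
    simp only [hh] at h
    rw [← Finset.mul_sum] at h
    simp only [hpdre, hpdim]
    linarith
  · intro x
    have h := congrArg Complex.re (hsq x)
    rw [Complex.re_sum] at h
    simp only [Complex.zero_re] at h
    have hh : ∀ z : ℂ, (z ^ 2).re = z.re ^ 2 - z.im ^ 2 := fun z => by
      rw [sq, Complex.mul_re]; ring
    simp only [hh] at h
    rw [Finset.sum_sub_distrib] at h
    simp only [hpdre, hpdim]
    linarith
end
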